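/- arXiv:2311.16437 — 7 statements merged into one kernel-verified Lean document; each statement's English description precedes it below -/
import Mathlib

section
/- In the alternating group A₅, the product of any three non-trivial conjugacy classes covers A₅ ∖ {1}: for all non-trivial u₁, u₂, u₃ and any non-trivial u₄, there exist x, y, z with u₄ = x⁻¹u₁x · y⁻¹u₂y · z⁻¹u₃z. -/
/-!
For nontrivial `a, b ∈ A₅` some product of a conjugate of `a` and a conjugate of `b` is a
3-cycle; this is checked on class representatives. Applied to `u₂, u₃` it puts a 3-cycle `τ`
into the product of their classes. Applied to `u₁⁻¹, u₄` it writes `u₄` as a conjugate of `u₁`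
times a 3-cycle, and that 3-cycle is a conjugate of `τ` because all 3-cycles are conjugate in `A₅`.
-/

open Equiv Equiv.Perm

theorem Equiv.Perm.IsThreeCycle.conj {α : Type*} [Fintype α] [DecidableEq α] {σ : Perm α}
    (h : IsThreeCycle σ) (g : Perm α) : IsThreeCycle (g⁻¹ * σ * g) := by
  simpa only [IsThreeCycle, inv_inv] using (cycleType_conj (τ := g⁻¹) (σ := σ)).trans h

theorem Equiv.Perm.isThreeCycle_of_pow_three_eq_one {α : Type*} [Fintype α] [DecidableEq α]
    (hα : Fintype.card α < 6) {σ : Perm α} (h1 : σ ≠ 1) (h3 : σ ^ 3 = 1) : IsThreeCycle σ := by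
  have hord : orderOf σ = 3 := orderOf_eq_prime h3 h1
  obtain ⟨n, hn⟩ := cycleType_prime_order (hord ▸ Nat.prime_three)
  have hsum := sum_cycleType_le σ
  rw [hn, hord, Multiset.sum_replicate, smul_eq_mul] at hsum
  obtain rfl : n = 0 := by omega
  rw [IsThreeCycle, hn, hord]
  rfl

theorem exists_mul_conj_of_eq_conj {G : Type*} [Group G] {P : G → Prop}
    (hP : ∀ g σ, P σ → P (g⁻¹ * σ * g)) {a b r s g h x : G} (ha : a = g⁻¹ * r * g)
    (hb : b = h⁻¹ * s * h) (hx : P (r * (x⁻¹ * s * x))) : ∃ y, P (a * (y⁻¹ * b * y)) := by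
  refine ⟨h⁻¹ * x * g, ?_⟩
  convert hP g _ hx using 1
  rw [ha, hb]
  group

namespace AlternatingFive

local notation "A₅" => alternatingGroup (Fin 5)

/-- The 5-cycles split into two conjugacy classes of `A₅`, those of `(0 1 2 3 4)` and its square. -/
def classReps : List A₅ :=
  [⟨c[0, 1, 2], mem_alternatingGroup.2 (by decide)⟩,
    ⟨c[0, 1] * c[2, 3], mem_alternatingGroup.2 (by decide)⟩,
    ⟨c[0, 1, 2, 3, 4], mem_alternatingGroup.2 (by decide)⟩,
    ⟨c[0, 2, 4, 1, 3], mem_alternatingGroup.2 (by decide)⟩]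

set_option maxRecDepth 10000 in
theorem exists_eq_conj_of_ne_one :
    ∀ a : A₅, a ≠ 1 → ∃ r ∈ classReps, ∃ g : A₅, a = g⁻¹ * r * g := by
  decide

set_option maxRecDepth 10000 in
theorem exists_mul_conj_pow_three_eq_one : ∀ r ∈ classReps, ∀ s ∈ classReps,
    ∃ x : A₅, r * (x⁻¹ * s * x) ≠ 1 ∧ (r * (x⁻¹ * s * x)) ^ 3 = 1 := by
  decide

theorem exists_isThreeCycle_mul_conj {a b : A₅} (ha : a ≠ 1) (hb : b ≠ 1) :
    ∃ x : A₅, IsThreeCycle ((a * (x⁻¹ * b * x) : A₅) : Perm (Fin 5)) := by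
  obtain ⟨r, hr, g, rfl⟩ := exists_eq_conj_of_ne_one a ha
  obtain ⟨s, hs, h, rfl⟩ := exists_eq_conj_of_ne_one b hb
  obtain ⟨x, hx1, hx3⟩ := exists_mul_conj_pow_three_eq_one r hr s hs
  have hconj (g σ : A₅) (hσ : IsThreeCycle (σ : Perm (Fin 5))) :
      IsThreeCycle ((g⁻¹ * σ * g : A₅) : Perm (Fin 5)) := by
    push_cast
    exact hσ.conj g
  have hσ : IsThreeCycle ((r * (x⁻¹ * s * x) : A₅) : Perm (Fin 5)) :=
    isThreeCycle_of_pow_three_eq_one (by simp) (by exact_mod_cast hx1) (by exact_mod_cast hx3)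
  exact exists_mul_conj_of_eq_conj hconj rfl rfl hσ

theorem exists_eq_conj_mul_conj_of_isThreeCycle {a c τ : A₅} (ha : a ≠ 1) (hc : c ≠ 1)
    (hτ : IsThreeCycle (τ : Perm (Fin 5))) : ∃ x y : A₅, c = x⁻¹ * a * x * (y⁻¹ * τ * y) := by
  obtain ⟨x, hσ⟩ := exists_isThreeCycle_mul_conj (inv_ne_one.2 ha) hc
  obtain ⟨k, hk⟩ := isConj_iff.1 (alternatingGroup.isThreeCycle_isConj (by simp) hτ hσ)
  have hc' : c = x * a * (k * τ * k⁻¹) * x⁻¹ := by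
    rw [hk]
    group
  exact ⟨x⁻¹, k⁻¹ * x⁻¹, by rw [hc']; group⟩

end AlternatingFive

open AlternatingFive in
/-- (S3) in A₅: the product of any three non-trivial conjugacy classes covers
`A₅ \ {1}`. -/
theorem stmt_6 (u₁ u₂ u₃ u₄ : alternatingGroup (Fin 5))
    (h₁ : u₁ ≠ 1) (h₂ : u₂ ≠ 1) (h₃ : u₃ ≠ 1) (h₄ : u₄ ≠ 1) :
    ∃ x y z : alternatingGroup (Fin 5),
      u₄ = x⁻¹ * u₁ * x * (y⁻¹ * u₂ * y) * (z⁻¹ * u₃ * z) := by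
  obtain ⟨y, hτ⟩ := exists_isThreeCycle_mul_conj h₂ h₃
  obtain ⟨x, z, hu₄⟩ := exists_eq_conj_mul_conj_of_isThreeCycle h₁ h₄ hτ
  exact ⟨x, z, y * z, by rw [hu₄]; group⟩
end

section
/- Let H = ⊕_{i∈ℤ} P be the restricted direct sum of copies of a group P indexed by ℤ, and let α be the shift automorphism α((h_i)_i) = (h_{i+1})_i. Then for every h̄ ∈ H there exist ḡ ∈ H, an index i ∈ ℤ, and an element h* ∈ H supported only at i, such that h̄ = ḡ·α(ḡ⁻¹)·h*. -/
/-!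
Let the support of `f` lie in `[a, b]` and put `g j = f j * f (j + 1) * ⋯ * f b` for `a ≤ j`,
`g j = 1` for `j < a`. Then `g j = f j * g (j + 1)` for `j ≥ a`, which is exactly the coordinate
`j` of `f = g * α(g⁻¹) * h`; the cut-off at `a` makes `g` finitely supported and leaves a single
defect at `a - 1`, which `h` absorbs.
-/

/-- The one-step shift on the restricted direct sum `⊕_{i∈ℤ} P`. -/
def shiftFun {P : Type*} [Group P] (f : ℤ → P) : ℤ → P := fun i => f (i + 1)

section

variable {P : Type*} [Group P] (f : ℤ → P) (b : ℤ)

/-- The ordered product `f j * f (j + 1) * ⋯ * f b`, equal to `1` when `b < j`. -/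
def tailProd (j : ℤ) : P :=
  ((List.range (b + 1 - j).toNat).map fun m : ℕ => f (j + m)).prod

variable {f b}

lemma tailProd_of_lt {j : ℤ} (hj : b < j) : tailProd f b j = 1 := by
  simp [tailProd, Int.toNat_eq_zero.mpr (by omega : b + 1 - j ≤ 0)]

lemma tailProd_eq_mul (hf : ∀ j, b < j → f j = 1) (j : ℤ) :
    tailProd f b j = f j * tailProd f b (j + 1) := by
  rcases le_or_gt j b with hjb | hjb
  · have hlen : (b + 1 - j).toNat = (b + 1 - (j + 1)).toNat + 1 := by omega
    rw [tailProd, hlen, List.prod_range_succ', tailProd]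
    congr 2
    · simp
    · congr 1
      funext m
      push_cast
      ring_nf
  · rw [tailProd_of_lt hjb, tailProd_of_lt (by omega), hf j hjb, one_mul]

lemma mulSupport_mulIndicator_tailProd_subset (a : ℤ) :
    Function.mulSupport ((Set.Ici a).mulIndicator (tailProd f b)) ⊆ Set.Icc a b := by
  rw [Set.mulSupport_mulIndicator]
  rintro j ⟨hja, hj⟩
  exact ⟨hja, not_lt.mp fun hjb => hj (tailProd_of_lt hjb)⟩

lemma eq_mulIndicator_tailProd_mul_shiftFun_mul_mulSingle {a : ℤ}
    (hf : Function.mulSupport f ⊆ Set.Icc a b) :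
    let g := (Set.Ici a).mulIndicator (tailProd f b)
    f = g * shiftFun g⁻¹ * Pi.mulSingle (a - 1) (tailProd f b a) := by
  intro g
  have hf_out : ∀ j, j ∉ Set.Icc a b → f j = 1 := Function.mulSupport_subset_iff'.mp hf
  funext j
  simp only [Pi.mul_apply, Pi.inv_apply, shiftFun, g]
  rcases lt_trichotomy j (a - 1) with hj | rfl | hj
  · rw [hf_out j (by simp; omega), Set.mulIndicator_of_notMem (by simp; omega),
      Set.mulIndicator_of_notMem (by simp; omega), Pi.mulSingle_eq_of_ne (by omega)]
    simp
  · rw [hf_out _ (by simp), Set.mulIndicator_of_notMem (by simp), sub_add_cancel,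
      Set.mulIndicator_of_mem (by simp), Pi.mulSingle_eq_same]
    group
  · rw [Set.mulIndicator_of_mem (by simp; omega), Set.mulIndicator_of_mem (by simp; omega),
      Pi.mulSingle_eq_of_ne (by omega),
      tailProd_eq_mul (fun j hj => hf_out j (by simp; omega)) j]
    group

end

/-- Every finitely supported `h̄ : ℤ → P` decomposes as a `[1,t]`-commutator
`ḡ · α(ḡ⁻¹)` times an element supported at a single index `i`. -/
theorem stmt_9 {P : Type*} [Group P] (f : ℤ → P)
    (hf : (Function.mulSupport f).Finite) :
    ∃ g : ℤ → P, (Function.mulSupport g).Finite ∧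
      ∃ (i : ℤ) (h : ℤ → P), (∀ j : ℤ, j ≠ i → h j = 1) ∧
        f = g * shiftFun g⁻¹ * h := by
  obtain ⟨a, ha⟩ := hf.bddBelow
  obtain ⟨b, hb⟩ := hf.bddAbove
  have hsupp : Function.mulSupport f ⊆ Set.Icc a b := fun j hj => ⟨ha hj, hb hj⟩
  exact ⟨_, (Set.finite_Icc a b).subset (mulSupport_mulIndicator_tailProd_subset a),
    a - 1, _, fun j hj => Pi.mulSingle_eq_of_ne hj _,
    eq_mulIndicator_tailProd_mul_shiftFun_mul_mulSingle hsupp⟩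
end

section
/- Let P be a group satisfying: (S1) for all a₁, a₂ ∈ P there exist x, y with a₂ = x⁻¹a₁⁻¹yxy⁻¹, and (S2) for all a₁, a₂, a₃ ∈ P there exist u, v with a₂ = a₃·u·a₁⁻¹·a₃⁻¹·v·u⁻¹·v⁻¹. Let H = ⊕_{i∈ℤ} P with shift automorphism α. Then every element h̄ ∈ H can be written as h̄ = ḡ₁·α(ḡ₁⁻¹)·ḡ₂·α(ḡ₂⁻¹) for some ḡ₁, ḡ₂ ∈ H (i.e., every element of H is a [2,t]-commutator). -/
section ShiftComm

variable {G : Type*} [Group G]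

def shiftComm (g : ℤ → G) : ℤ → G := g * shiftFun g⁻¹

lemma shiftComm_apply (g : ℤ → G) (i : ℤ) : shiftComm g i = g i * (g (i + 1))⁻¹ := rfl

def suffixProd (f : ℤ → G) (n i : ℤ) : G :=
  ((List.range (n + 1 - i).toNat).map fun k : ℕ => f (i + k)).prod

variable {f f' : ℤ → G} {n i : ℤ}

lemma suffixProd_of_lt (h : n < i) : suffixProd f n i = 1 := by
  simp [suffixProd, Int.toNat_eq_zero.2 (by omega : n + 1 - i ≤ 0)]

lemma suffixProd_of_le (f : ℤ → G) (h : i ≤ n) :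
    suffixProd f n i = f i * suffixProd f n (i + 1) := by
  rw [suffixProd, show (n + 1 - i).toNat = (n + 1 - (i + 1)).toNat + 1 by omega,
    List.range_succ_eq_map]
  simp only [List.map_cons, List.map_map, List.prod_cons, Function.comp_def, Nat.cast_zero,
    add_zero, Nat.succ_eq_add_one, Nat.cast_add, Nat.cast_one, suffixProd]
  congr 3 with k
  ring_nf

lemma suffixProd_congr (h : ∀ j ≥ i, f j = f' j) : suffixProd f n i = suffixProd f' n i :=
  congrArg List.prod <| List.map_congr_left fun k _ => h _ (by omega)

lemma shiftComm_suffixProd (hf : ∀ i > n, f i = 1) : shiftComm (suffixProd f n) = f := by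
  funext i
  rw [shiftComm_apply]
  rcases le_or_gt i n with h | h
  · rw [suffixProd_of_le f h, mul_inv_cancel_right]
  · rw [suffixProd_of_lt h, suffixProd_of_lt (by omega), hf i h, inv_one, mul_one]

lemma suffixProd_eq_of_le {m : ℤ} (hf : ∀ i < m, f i = 1) (hi : i ≤ m) :
    suffixProd f n i = suffixProd f n m := by
  induction i, hi using Int.leInductionDown with
  | base => rfl
  | pred i hi ih =>
    rcases le_or_gt (i - 1) n with h | h
    · rw [suffixProd_of_le f h, hf _ (by omega), one_mul, sub_add_cancel, ih]
    · rw [suffixProd_of_lt h, ← ih, suffixProd_of_lt (by omega : n < i)]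

lemma exists_shiftComm_eq {m : ℤ} (hlow : ∀ i < m, f i = 1) (hhigh : ∀ i > n, f i = 1)
    (htot : suffixProd f n m = 1) :
    ∃ g : ℤ → G, (Function.mulSupport g).Finite ∧ shiftComm g = f := by
  refine ⟨suffixProd f n, (Set.finite_Icc m n).subset fun i hi => ?_, shiftComm_suffixProd hhigh⟩
  by_contra hi'
  rw [Set.mem_Icc, not_and_or, not_le, not_le] at hi'
  rcases hi' with h | h
  · exact hi (by rw [suffixProd_eq_of_le hlow h.le, htot])
  · exact hi (suffixProd_of_lt h)

lemma shiftComm_apply_eq_one {g : ℤ → G} (h₀ : g i = 1) (h₁ : g (i + 1) = 1) :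
    shiftComm g i = 1 := by
  rw [shiftComm_apply, h₀, h₁, inv_one, mul_one]

end ShiftComm

lemma exists_shiftComm_mul_shiftComm_eq {P : Type*} [Group P]
    (hS1 : ∀ a₁ a₂ : P, ∃ x y : P, a₂ = x⁻¹ * a₁⁻¹ * y * x * y⁻¹)
    {f : ℤ → P} {m n : ℤ} (hmn : m < n) (hlow : ∀ i < m, f i = 1) (hhigh : ∀ i > n, f i = 1) :
    ∃ g₁ g₂ : ℤ → P, (Function.mulSupport g₁).Finite ∧ (Function.mulSupport g₂).Finite ∧
      f = shiftComm g₁ * shiftComm g₂ := by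
  obtain ⟨x, y, hxy⟩ := hS1 (suffixProd f n (m + 1))⁻¹ (f m)⁻¹
  set g₁ : ℤ → P := fun i => if i = m then y else if i = m + 1 then x else 1 with hg₁
  have hg₁_eq_one : ∀ i, i ≠ m → i ≠ m + 1 → g₁ i = 1 := fun i h₀ h₁ => by
    simp [hg₁, h₀, h₁]
  have hg₁_supp : Function.mulSupport g₁ ⊆ {m, m + 1} := fun i hi => by
    by_contra h
    simp only [Set.mem_insert_iff, Set.mem_singleton_iff, not_or] at h
    exact hi (hg₁_eq_one i h.1 h.2)
  have hg₁_out : ∀ i, i < m - 1 ∨ m + 1 < i → shiftComm g₁ i = 1 := fun i hi =>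
    shiftComm_apply_eq_one (hg₁_eq_one _ (by omega) (by omega))
      (hg₁_eq_one _ (by omega) (by omega))
  set b := (shiftComm g₁)⁻¹ * f with hb
  have hb_low : ∀ i < m - 1, b i = 1 := fun i hi => by
    simp [hb, hg₁_out i (.inl hi), hlow i (by omega)]
  have hb_high : ∀ i > n, b i = 1 := fun i hi => by
    simp [hb, hg₁_out i (.inr (by omega)), hhigh i hi]
  have hb_tot : suffixProd b n (m - 1) = 1 := by
    have htail : suffixProd b n (m + 2) = suffixProd f n (m + 2) :=
      suffixProd_congr fun j hj => by simp [hb, hg₁_out j (.inr (by omega))]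
    calc suffixProd b n (m - 1)
        = b (m - 1) * (b m * (b (m + 1) * suffixProd f n (m + 2))) := by
          rw [suffixProd_of_le b (by omega), sub_add_cancel, suffixProd_of_le b (by omega),
            suffixProd_of_le b (by omega), add_assoc, one_add_one_eq_two, htail]
      _ = y * (x * y⁻¹ * f m) * (x⁻¹ * f (m + 1)) * suffixProd f n (m + 2) := by
          simp [hb, shiftComm_apply, hg₁, hlow (m - 1) (by omega),
            show m + 1 + 1 ≠ m by omega, show m - 1 ≠ m + 1 by omega, mul_assoc]
      _ = 1 := by
          rw [suffixProd_of_le f (by omega : m + 1 ≤ n), add_assoc, one_add_one_eq_two,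
            inv_eq_iff_eq_inv] at hxy
          rw [hxy]
          group
  obtain ⟨g₂, hg₂, hb_eq⟩ := exists_shiftComm_eq hb_low hb_high hb_tot
  refine ⟨g₁, g₂, (Set.toFinite _).subset hg₁_supp, hg₂, ?_⟩
  rw [hb_eq, hb, mul_inv_cancel_left]

theorem stmt_10_general {P : Type*} [Group P]
    (hS1 : ∀ a₁ a₂ : P, ∃ x y : P, a₂ = x⁻¹ * a₁⁻¹ * y * x * y⁻¹)
    (f : ℤ → P) (hf : (Function.mulSupport f).Finite) :
    ∃ g₁ g₂ : ℤ → P, (Function.mulSupport g₁).Finite ∧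
      (Function.mulSupport g₂).Finite ∧
      f = g₁ * shiftFun g₁⁻¹ * (g₂ * shiftFun g₂⁻¹) := by
  obtain ⟨n, hn⟩ := hf.bddAbove
  obtain ⟨m, hm⟩ := hf.bddBelow
  exact exists_shiftComm_mul_shiftComm_eq hS1 (lt_max_of_lt_right (lt_add_one m))
    (fun i hi => Function.notMem_mulSupport.1 fun h => (hm h).not_gt hi)
    (fun i hi => Function.notMem_mulSupport.1 fun h =>
      (hn h).not_gt ((le_max_left n (m + 1)).trans_lt hi))

/-- If `P` satisfies (S1) and (S2), then every finitely supported element of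
`⊕_{i∈ℤ} P` is a `[2,t]`-commutator. -/
theorem stmt_10 {P : Type*} [Group P]
    (hS1 : ∀ a₁ a₂ : P, ∃ x y : P, a₂ = x⁻¹ * a₁⁻¹ * y * x * y⁻¹)
    (hS2 : ∀ a₁ a₂ a₃ : P, ∃ u v : P,
      a₂ = a₃ * u * a₁⁻¹ * a₃⁻¹ * v * u⁻¹ * v⁻¹)
    (f : ℤ → P) (hf : (Function.mulSupport f).Finite) :
    ∃ g₁ g₂ : ℤ → P, (Function.mulSupport g₁).Finite ∧
      (Function.mulSupport g₂).Finite ∧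
      f = g₁ * shiftFun g₁⁻¹ * (g₂ * shiftFun g₂⁻¹) :=
  stmt_10_general hS1 f hf
end

section
/- Let P be a group, H = ⊕_{i∈ℤ} P with shift automorphism α, and let h̄ = h₁h₂h₃ ∈ H be an element supported exactly on positions 1,2,3 with all three coordinates h₁, h₂, h₃ non-trivial. Then h̄ can be written as α(ḡ₁)·ḡ₁⁻¹·ḡ₂·α(ḡ₂⁻¹) for some ḡ₁, ḡ₂ ∈ H if and only if there exist x, y ∈ P with h₃ = x⁻¹h₂⁻¹x·y⁻¹h₁⁻¹y. -/
/-- An element `h₁h₂h₃` of `⊕_{i∈ℤ} P` supported exactly on positions `1,2,3`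
is a `[±,t]`-commutator iff `h₃` is a product of a conjugate of `h₂⁻¹` and a
conjugate of `h₁⁻¹`. -/
theorem stmt_11 {P : Type*} [Group P] (h₁ h₂ h₃ : P)
    (n₁ : h₁ ≠ 1) (n₂ : h₂ ≠ 1) (n₃ : h₃ ≠ 1)
    (f : ℤ → P)
    (hf : f = fun i : ℤ =>
      if i = 1 then h₁ else if i = 2 then h₂ else if i = 3 then h₃ else 1) :
    (∃ g₁ g₂ : ℤ → P, (Function.mulSupport g₁).Finite ∧
        (Function.mulSupport g₂).Finite ∧
        f = shiftFun g₁ * g₁⁻¹ * (g₂ * shiftFun g₂⁻¹)) ↔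
      ∃ x y : P, h₃ = x⁻¹ * h₂⁻¹ * x * (y⁻¹ * h₁⁻¹ * y) := by
  constructor
  · rintro ⟨g₁, g₂, hg₁, hg₂, hF⟩
    set u : ℤ → P := fun i => (g₁ i)⁻¹ * g₂ i with hu
    have hrec : ∀ i : ℤ, u i = (g₁ (i + 1))⁻¹ * f i * g₁ (i + 1) * u (i + 1) := by
      intro i
      have : f i = (shiftFun g₁ * g₁⁻¹ * (g₂ * shiftFun g₂⁻¹)) i := by rw [hF]
      simp only [Pi.mul_apply, Pi.inv_apply, shiftFun] at this
      rw [this, hu]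
      group
    have hfone : ∀ i : ℤ, i ≠ 1 → i ≠ 2 → i ≠ 3 → f i = 1 := by
      intro i hi1 hi2 hi3
      rw [hf]
      simp only [if_neg hi1, if_neg hi2, if_neg hi3]
    have hconst : ∀ i : ℤ, i ≠ 1 → i ≠ 2 → i ≠ 3 → u i = u (i + 1) := by
      intro i hi1 hi2 hi3
      rw [hrec i, hfone i hi1 hi2 hi3]
      group
    have hufin : (Function.mulSupport u).Finite := by
      apply (hg₁.union hg₂).subset
      intro i hi
      by_contra hc
      simp only [Set.mem_union, Function.mem_mulSupport, not_or, not_not] at hc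
      apply hi
      simp [hu, hc.1, hc.2]
    have claimA : ∀ j : ℤ, j ≤ 1 → u j = u 1 := by
      intro j hj
      refine Int.le_induction_down (motive := fun j _ => u j = u 1) rfl (fun n hn ih => ?_) j hj
      have h' : u (n - 1) = u (n - 1 + 1) := by
        apply hconst <;> omega
      show u (n - 1) = u 1
      rw [h']
      simpa using ih
    have claimB : ∀ j : ℤ, 4 ≤ j → u j = u 4 := by
      intro j hj
      refine Int.le_induction (motive := fun j _ => u j = u 4) rfl (fun n hn ih => ?_) j hj
      have h' : u n = u (n + 1) := by apply hconst <;> omega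
      show u (n + 1) = u 4
      rw [← h']; exact ih
    have hu1 : u 1 = 1 := by
      obtain ⟨lb, hlb⟩ := hufin.bddBelow
      have hj : u (min lb 1 - 1) = 1 := by
        by_contra hc
        have := hlb hc
        omega
      rw [← claimA (min lb 1 - 1) (by omega), hj]
    have hu4 : u 4 = 1 := by
      obtain ⟨ub, hub⟩ := hufin.bddAbove
      have hj : u (max ub 4 + 1) = 1 := by
        by_contra hc
        have := hub hc
        omega
      rw [← claimB (max ub 4 + 1) (by omega), hj]
    have hf1 : f 1 = h₁ := by rw [hf]; norm_num
    have hf2 : f 2 = h₂ := by rw [hf]; norm_num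
    have hf3 : f 3 = h₃ := by rw [hf]; norm_num
    have E : (1 : P) = (g₁ 2)⁻¹ * h₁ * g₁ 2 *
        ((g₁ 3)⁻¹ * h₂ * g₁ 3 * ((g₁ 4)⁻¹ * h₃ * g₁ 4)) := by
      have e1 := hrec 1
      norm_num [hf1] at e1
      have e2 := hrec 2
      norm_num [hf2] at e2
      have e3 := hrec 3
      norm_num [hf3] at e3
      rw [e2, e3, hu4] at e1
      rw [← hu1, e1]
      group
    refine ⟨g₁ 3 * (g₁ 4)⁻¹, g₁ 2 * (g₁ 4)⁻¹, ?_⟩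
    have E' : ((g₁ 2)⁻¹ * h₁ * g₁ 2 * ((g₁ 3)⁻¹ * h₂ * g₁ 3)) *
        ((g₁ 4)⁻¹ * h₃ * g₁ 4) = 1 := by
      rw [mul_assoc]; exact E.symm
    have hc := inv_eq_of_mul_eq_one_right E'
    calc h₃ = g₁ 4 * ((g₁ 4)⁻¹ * h₃ * g₁ 4) * (g₁ 4)⁻¹ := by group
    _ = g₁ 4 * ((g₁ 2)⁻¹ * h₁ * g₁ 2 * ((g₁ 3)⁻¹ * h₂ * g₁ 3))⁻¹ * (g₁ 4)⁻¹ := by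
        rw [hc]
    _ = _ := by group
  · rintro ⟨x, y, hxy⟩
    refine ⟨(fun i => if i = 2 then y else if i = 3 then x else 1),
      (fun i => (if i = 2 then y else if i = 3 then x else 1) *
        (if i = 2 then x⁻¹ * h₂ * x * h₃ else if i = 3 then h₃ else 1)),
      ?_, ?_, ?_⟩
    · apply (Set.toFinite ({2, 3} : Set ℤ)).subset
      intro i hi
      simp only [Function.mem_mulSupport] at hi
      by_contra hc
      simp only [Set.mem_insert_iff, Set.mem_singleton_iff, not_or] at hc
      exact hi (by simp [if_neg hc.1, if_neg hc.2])
    · apply (Set.toFinite ({2, 3} : Set ℤ)).subset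
      intro i hi
      simp only [Function.mem_mulSupport] at hi
      by_contra hc
      simp only [Set.mem_insert_iff, Set.mem_singleton_iff, not_or] at hc
      exact hi (by simp [if_neg hc.1, if_neg hc.2])
    · subst hxy
      funext i
      simp only [Pi.mul_apply, Pi.inv_apply, shiftFun, hf]
      by_cases hi1 : i = 1
      · subst hi1; norm_num; group
      · by_cases hi2 : i = 2
        · subst hi2; norm_num; group
        · by_cases hi3 : i = 3
          · subst hi3; norm_num
          · have n0 : ¬(i + 1 = 2) := by omega
            have n1 : ¬(i + 1 = 3) := by omega
            simp [if_neg hi1, if_neg hi2, if_neg hi3, if_neg n0, if_neg n1]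
end

section
/- Let G be a group normally generated by a finite symmetric set S, with conjugation-invariant word norm ‖·‖ associated to the conjugacy closure of S. Then G (with ‖·‖) is metrically fully residually finite with respect to integer-valued normed groups if and only if for every m ∈ ℕ the ball B_m(1) = {g ∈ G : ‖g‖ ≤ m} is closed in the profinite topology of G. -/
open Pointwise

/-- A normally finitely generated group with the conjugation-invariant word
norm is metrically fully residually finite (w.r.t. integer-valued normed
groups) iff every ball `B_m(1)` is closed in the profinite topology. -/
theorem stmt_13 {G : Type*} [Group G] (S : Finset G)
    (hSsymm : ∀ s ∈ S, s⁻¹ ∈ S)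
    (Sbar : Set G)
    (hSbar : Sbar = {x : G | ∃ s ∈ S, ∃ g : G, g * s * g⁻¹ = x})
    (hgen : ∀ g : G, ∃ k : ℕ, g ∈ Sbar ^ k)
    (wn : G → ℕ)
    (hwn : ∀ g : G, IsLeast {k : ℕ | g ∈ Sbar ^ k} (wn g)) :
    (∀ (D : Finset G) (Q : Finset ℕ), 0 ∈ Q →
        ∃ (C : GrpCat) (_ : Finite C) (ℓC : C → ℕ),
          (ℓC 1 = 0 ∧ (∀ c, ℓC c⁻¹ = ℓC c) ∧
            (∀ c d, ℓC (c * d) ≤ ℓC c + ℓC d) ∧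
            (∀ c, ℓC c = 0 → c = 1) ∧
            (∀ c d, ℓC (d⁻¹ * c * d) = ℓC c)) ∧
          ∃ φ : G →* C, Set.InjOn φ D ∧
            ∀ g ∈ D, ∀ q ∈ Q,
              (wn g < q ↔ ℓC (φ g) < q) ∧ (wn g = q ↔ ℓC (φ g) = q) ∧
                (q < wn g ↔ q < ℓC (φ g))) ↔
      (∀ m : ℕ, ∀ g : G, ¬ wn g ≤ m →
        ∃ N : Subgroup G, N.Normal ∧ N.FiniteIndex ∧
          ∀ h ∈ N, ¬ wn (g * h) ≤ m) := by
  classical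
  -- basic properties of the word norm
  have hmem : ∀ g : G, g ∈ Sbar ^ wn g := fun g => (hwn g).1
  have hle : ∀ (g : G) (k : ℕ), g ∈ Sbar ^ k → wn g ≤ k := fun g k h => (hwn g).2 h
  have wn_one : wn (1 : G) = 0 := by
    have : (1 : G) ∈ Sbar ^ 0 := by simp [pow_zero]
    exact Nat.le_zero.mp (hle 1 0 this)
  have wn_eq_zero : ∀ g : G, wn g = 0 → g = 1 := by
    intro g hg
    have := hmem g
    rw [hg, pow_zero] at this
    simpa using this
  have Sbar_inv : Sbar⁻¹ = Sbar := by
    subst hSbar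
    ext x
    simp only [Set.mem_inv, Set.mem_setOf_eq]
    constructor
    · rintro ⟨s, hs, g, hg⟩
      refine ⟨s⁻¹, hSsymm s hs, g, ?_⟩
      have hx : x = (g * s * g⁻¹)⁻¹ := by rw [hg, inv_inv]
      rw [hx]; group
    · rintro ⟨s, hs, g, hg⟩
      refine ⟨s⁻¹, hSsymm s hs, g, ?_⟩
      rw [← hg]; group
  have wn_inv_le : ∀ g : G, wn g⁻¹ ≤ wn g := by
    intro g
    apply hle
    have : g⁻¹ ∈ (Sbar ^ wn g)⁻¹ := by
      rw [Set.mem_inv, inv_inv]; exact hmem g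
    rwa [← inv_pow, Sbar_inv] at this
  have wn_inv : ∀ g : G, wn g⁻¹ = wn g := by
    intro g
    refine le_antisymm (wn_inv_le g) ?_
    have := wn_inv_le g⁻¹
    rwa [inv_inv] at this
  have wn_mul : ∀ g h : G, wn (g * h) ≤ wn g + wn h := by
    intro g h
    apply hle
    rw [pow_add]
    exact Set.mul_mem_mul (hmem g) (hmem h)
  have conj_pow : ∀ (k : ℕ) (d : G), ∀ x ∈ Sbar ^ k, d * x * d⁻¹ ∈ Sbar ^ k := by
    intro k
    induction k with
    | zero =>
      intro d x hx
      rw [pow_zero] at hx ⊢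
      simp only [Set.mem_one] at hx ⊢
      rw [hx]; group
    | succ k ih =>
      intro d x hx
      rw [pow_succ] at hx ⊢
      obtain ⟨a, ha, b, hb, rfl⟩ := hx
      have hb' : d * b * d⁻¹ ∈ Sbar := by
        rw [hSbar] at hb ⊢
        obtain ⟨s, hs, g, rfl⟩ := hb
        exact ⟨s, hs, d * g, by group⟩
      have : d * (a * b) * d⁻¹ = (d * a * d⁻¹) * (d * b * d⁻¹) := by group
      rw [this]
      exact Set.mul_mem_mul (ih d a ha) hb'
  have wn_conj : ∀ d g : G, wn (d * g * d⁻¹) = wn g := by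
    have half : ∀ d g : G, wn (d * g * d⁻¹) ≤ wn g := by
      intro d g
      exact hle _ _ (conj_pow (wn g) d g (hmem g))
    intro d g
    refine le_antisymm (half d g) ?_
    have := half d⁻¹ (d * g * d⁻¹)
    have h2 : d⁻¹ * (d * g * d⁻¹) * d⁻¹⁻¹ = g := by group
    rw [h2] at this
    exact this
  constructor
  · -- metric full RF → balls closed
    intro H m g hg
    obtain ⟨C, finC, ℓC, ⟨hC1, hCinv, hCmul, hC0, hCconj⟩, φ, hinj, hcomp⟩ :=
      H (insert g S) ({0, 1, m} : Finset ℕ) (by simp)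
    -- each generator has small image norm
    have hSsmall : ∀ s ∈ S, ℓC (φ s) ≤ 1 := by
      intro s hs
      have hws : wn s ≤ 1 := by
        apply hle
        rw [pow_one, hSbar]
        exact ⟨s, hs, 1, by group⟩
      have hc := hcomp s (Finset.mem_insert_of_mem hs) 1 (by simp)
      obtain ⟨h1, h2, _⟩ := hc
      interval_cases h : wn s
      · have := h1.mp (by omega); omega
      · have := h2.mp rfl; omega
    -- key: ℓC (φ x) ≤ wn x
    have hkey : ∀ (k : ℕ), ∀ x ∈ Sbar ^ k, ℓC (φ x) ≤ k := by
      intro k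
      induction k with
      | zero =>
        intro x hx
        rw [pow_zero] at hx
        simp only [Set.mem_one] at hx
        rw [hx, map_one, hC1]
      | succ k ih =>
        intro x hx
        rw [pow_succ] at hx
        obtain ⟨a, ha, b, hb, rfl⟩ := hx
        have hbS : ℓC (φ b) ≤ 1 := by
          rw [hSbar] at hb
          obtain ⟨s, hs, c, rfl⟩ := hb
          have : φ (c * s * c⁻¹) = (φ c⁻¹)⁻¹ * φ s * φ c⁻¹ := by
            simp [map_mul, map_inv]
          rw [this, hCconj]
          exact hSsmall s hs
        calc ℓC (φ (a * b)) = ℓC (φ a * φ b) := by rw [map_mul]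
          _ ≤ ℓC (φ a) + ℓC (φ b) := hCmul _ _
          _ ≤ k + 1 := add_le_add (ih a ha) hbS
    have hwn_key : ∀ x : G, ℓC (φ x) ≤ wn x := fun x => hkey (wn x) x (hmem x)
    refine ⟨φ.ker, inferInstance, ?_, ?_⟩
    · exact Subgroup.finiteIndex_ker φ
    · intro h hh hcon
      have hφh : φ h = 1 := hh
      have hg' : m < ℓC (φ g) := by
        have hc := hcomp g (Finset.mem_insert_self g S) m (by simp)
        exact hc.2.2.mp (by omega)
      have : ℓC (φ (g * h)) = ℓC (φ g) := by rw [map_mul, hφh, mul_one]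
      have := hwn_key (g * h)
      omega
  · -- balls closed → metric full RF
    intro H D Q hQ0
    set M : ℕ := Q.max' ⟨0, hQ0⟩ with hM
    have hQle : ∀ q ∈ Q, q ≤ M := fun q hq => Q.le_max' q hq
    set E : Finset G := D ∪ D⁻¹ * D with hE
    -- choose separating subgroups
    have key : ∀ x : G, ∃ N : Subgroup G, N.Normal ∧ N.FiniteIndex ∧
        (1 ≤ wn x → ∀ h ∈ N, ¬ wn (x * h) ≤ min (wn x) (M + 1) - 1) := by
      intro x
      by_cases hx : 1 ≤ wn x
      · obtain ⟨N, hN1, hN2, hN3⟩ := H (min (wn x) (M + 1) - 1) x (by omega)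
        exact ⟨N, hN1, hN2, fun _ => hN3⟩
      · exact ⟨⊤, inferInstance, inferInstance, fun h => absurd h hx⟩
    choose Nf hNnorm hNfin hNsep using key
    set N : Subgroup G := ⨅ x ∈ E, Nf x with hN
    have hNmem : ∀ y : G, y ∈ N ↔ ∀ x ∈ E, y ∈ Nf x := by
      intro y; simp [hN, Subgroup.mem_iInf]
    have hNNormal : N.Normal := by
      constructor
      intro n hn g
      rw [hNmem] at hn ⊢
      intro x hx
      exact (hNnorm x).conj_mem n (hn x hx) g
    have hNFin : N.FiniteIndex := Subgroup.finiteIndex_iInf' _ (fun x _ => hNfin x)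
    haveI := hNFin
    have finQ : Finite (G ⧸ N) := Subgroup.finite_quotient_of_finiteIndex (H := N)
    -- quotient norm
    set ℓC : G ⧸ N → ℕ := fun c => sInf {k | ∃ g : G, (QuotientGroup.mk g : G ⧸ N) = c ∧ wn g = k}
      with hℓC
    have hne : ∀ c : G ⧸ N, {k | ∃ g : G, (QuotientGroup.mk g : G ⧸ N) = c ∧ wn g = k}.Nonempty := by
      intro c
      obtain ⟨g, rfl⟩ := QuotientGroup.mk_surjective c
      exact ⟨wn g, g, rfl, rfl⟩
    have hreal : ∀ c : G ⧸ N, ∃ g : G, (QuotientGroup.mk g : G ⧸ N) = c ∧ wn g = ℓC c := by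
      intro c
      have := Nat.sInf_mem (hne c)
      exact this
    have hleq : ∀ g : G, ℓC (QuotientGroup.mk g) ≤ wn g := by
      intro g
      exact Nat.sInf_le ⟨g, rfl, rfl⟩
    have hℓ1 : ℓC 1 = 0 := by
      have : ℓC (QuotientGroup.mk (1 : G)) ≤ wn 1 := hleq 1
      rw [wn_one] at this
      simpa using this
    have hℓinv : ∀ c, ℓC c⁻¹ = ℓC c := by
      have half : ∀ c : G ⧸ N, ℓC c⁻¹ ≤ ℓC c := by
        intro c
        obtain ⟨g, rfl, hg⟩ := hreal c
        have : (QuotientGroup.mk g : G ⧸ N)⁻¹ = QuotientGroup.mk g⁻¹ := by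
          simp
        rw [this, ← hg, ← wn_inv g]
        exact hleq g⁻¹
      intro c
      refine le_antisymm (half c) ?_
      have := half c⁻¹
      rwa [inv_inv] at this
    have hℓmul : ∀ c d, ℓC (c * d) ≤ ℓC c + ℓC d := by
      intro c d
      obtain ⟨g, rfl, hg⟩ := hreal c
      obtain ⟨h, rfl, hh⟩ := hreal d
      have : (QuotientGroup.mk g : G ⧸ N) * QuotientGroup.mk h = QuotientGroup.mk (g * h) := by
        simp
      rw [this, ← hg, ← hh]
      exact le_trans (hleq (g * h)) (wn_mul g h)
    have hℓ0 : ∀ c, ℓC c = 0 → c = 1 := by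
      intro c hc
      obtain ⟨g, rfl, hg⟩ := hreal c
      rw [hc] at hg
      rw [wn_eq_zero g hg]
      simp
    have hℓconj : ∀ c d, ℓC (d⁻¹ * c * d) = ℓC c := by
      have half : ∀ c d, ℓC (d⁻¹ * c * d) ≤ ℓC c := by
        intro c d
        obtain ⟨g, rfl, hg⟩ := hreal c
        obtain ⟨d₀, rfl⟩ := QuotientGroup.mk_surjective d
        have : (QuotientGroup.mk d₀ : G ⧸ N)⁻¹ * QuotientGroup.mk g * QuotientGroup.mk d₀ =
            QuotientGroup.mk (d₀⁻¹ * g * d₀) := by simp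
        rw [this, ← hg]
        have hwc : wn (d₀⁻¹ * g * d₀) = wn g := by
          have := wn_conj d₀⁻¹ g
          simpa using this
        rw [← hwc]
        exact hleq _
      intro c d
      refine le_antisymm (half c d) ?_
      have := half (d⁻¹ * c * d) d⁻¹
      have h2 : d⁻¹⁻¹ * (d⁻¹ * c * d) * d⁻¹ = c := by group
      rwa [h2] at this
    have hNle : ∀ x ∈ E, N ≤ Nf x := by
      intro x hx y hy
      exact (hNmem y).mp hy x hx
    have hDE : ∀ g ∈ D, g ∈ E := fun g hg => Finset.mem_union_left _ hg
    -- lower bound for the quotient norm on D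
    have hlower : ∀ g ∈ E, min (wn g) (M + 1) ≤ ℓC (QuotientGroup.mk g) := by
      intro g hgE
      by_cases hg0 : wn g = 0
      · omega
      · obtain ⟨g₀, hg₀, hg₀'⟩ := hreal (QuotientGroup.mk g)
        have hh : g⁻¹ * g₀ ∈ N := QuotientGroup.eq.mp hg₀.symm
        have hsep := hNsep g (by omega) (g⁻¹ * g₀) (hNle g hgE hh)
        have : g * (g⁻¹ * g₀) = g₀ := by group
        rw [this] at hsep
        omega
    obtain ⟨G', instG', instFin', ⟨ψ⟩⟩ := Finite.exists_type_univ_nonempty_mulEquiv (G ⧸ N)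
    letI : Group G' := instG'
    refine ⟨GrpCat.of G', Finite.of_fintype G', fun c => ℓC (ψ.symm c),
      ⟨by simp [hℓ1], fun c => by simp [hℓinv], fun c d => by simpa using hℓmul _ _,
       fun c hc => by
         have := hℓ0 _ hc
         have h2 := congrArg ψ this
         simpa using h2,
       fun c d => by simpa using hℓconj (ψ.symm c) (ψ.symm d)⟩,
      ψ.toMonoidHom.comp (QuotientGroup.mk' N), ?_, ?_⟩
    · -- injectivity on D
      intro g hg g' hg' heq
      have heq' : (QuotientGroup.mk g : G ⧸ N) = QuotientGroup.mk g' := by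
        have : ψ (QuotientGroup.mk g) = ψ (QuotientGroup.mk g') := heq
        exact ψ.injective this
      have hx : g⁻¹ * g' ∈ N := QuotientGroup.eq.mp heq'
      by_contra hne'
      have hxne : g⁻¹ * g' ≠ 1 := by
        intro h
        apply hne'
        exact inv_injective (mul_eq_one_iff_eq_inv.mp h)
      have hxE : g⁻¹ * g' ∈ E := by
        apply Finset.mem_union_right
        exact Finset.mul_mem_mul (Finset.inv_mem_inv hg) hg'
      have hwx : 1 ≤ wn (g⁻¹ * g') := by
        rcases Nat.eq_zero_or_pos (wn (g⁻¹ * g')) with h | h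
        · exact absurd (wn_eq_zero _ h) hxne
        · exact h
      have hsep := hNsep (g⁻¹ * g') hwx ((g⁻¹ * g')⁻¹)
        (hNle _ hxE (N.inv_mem hx))
      rw [mul_inv_cancel] at hsep
      rw [wn_one] at hsep
      omega
    · -- norm comparisons
      intro g hg q hq
      have hqM : q ≤ M := hQle q hq
      have h1 : ℓC (QuotientGroup.mk g) ≤ wn g := hleq g
      have h2 : min (wn g) (M + 1) ≤ ℓC (QuotientGroup.mk g) := hlower g (hDE g hg)
      show (wn g < q ↔ ℓC (ψ.symm (ψ (QuotientGroup.mk g))) < q) ∧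
        (wn g = q ↔ ℓC (ψ.symm (ψ (QuotientGroup.mk g))) = q) ∧
        (q < wn g ↔ q < ℓC (ψ.symm (ψ (QuotientGroup.mk g))))
      rw [ψ.symm_apply_apply]
      omega
end

section
/- Let G_ℤ = H ⋊ ℤ where H = ⊕_{i∈ℤ} P for a finite group P satisfying (S1)–(S4), with ℤ acting by the shift α, and let t = (1,1). Then the conjugacy-invariant closure of S = H₀ ∪ {t,t⁻¹} equals (⋃_{i∈ℤ} H_i) ∪ T₊ ∪ T₋, where T₊ = {ḡ·α(ḡ⁻¹)·t : ḡ ∈ H}, T₋ = {α(ḡ)·ḡ⁻¹·t⁻¹ : ḡ ∈ H}, and ⋃_i H_i is the set of elements of H with support of size at most 1. -/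
variable (P : Type) [Group P]

/-- Finitely supported functions `ℤ → P`, as a subgroup of the full product. -/
def Hgrp : Subgroup (ℤ → P) where
  carrier := {f | (Function.mulSupport f).Finite}
  one_mem' := by simp [Function.mulSupport_one]
  mul_mem' := by
    intro a b ha hb
    exact (ha.union hb).subset (Function.mulSupport_mul a b)
  inv_mem' := by
    intro a ha
    simpa [Function.mulSupport_inv] using ha

/-- The one-step shift automorphism of `Hgrp P`. -/
def shiftAut : MulAut (Hgrp P) where
  toFun f := ⟨fun i => f.1 (i + 1), by
    have : Function.mulSupport (fun i : ℤ => f.1 (i + 1)) ⊆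
        (fun i : ℤ => i - 1) '' Function.mulSupport f.1 := by
      intro i hi
      exact ⟨i + 1, hi, by ring⟩
    exact (f.2.image _).subset this⟩
  invFun f := ⟨fun i => f.1 (i - 1), by
    have : Function.mulSupport (fun i : ℤ => f.1 (i - 1)) ⊆
        (fun i : ℤ => i + 1) '' Function.mulSupport f.1 := by
      intro i hi
      exact ⟨i - 1, hi, by ring⟩
    exact (f.2.image _).subset this⟩
  left_inv f := by ext i; simp
  right_inv f := by ext i; simp
  map_mul' f g := rfl

/-- The wreath-type group `G_ℤ = H ⋊ ℤ`. -/
abbrev GZ : Type :=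
  Hgrp P ⋊[zpowersHom (MulAut (Hgrp P)) (shiftAut P)] Multiplicative ℤ

/-- The element `t = (1,1)` of `G_ℤ`. -/
def tElt : GZ P := SemidirectProduct.inr (Multiplicative.ofAdd 1)

/-- The element of `Hgrp P` supported at `i` with value `h`. -/
def singleAt (i : ℤ) (h : P) : Hgrp P :=
  ⟨fun j => if j = i then h else 1, by
    apply Set.Finite.subset (Set.finite_singleton i)
    intro j hj
    by_contra hne
    simp only [Set.mem_singleton_iff] at hne
    exact hj (if_neg hne)⟩

section Aux

open SemidirectProduct

lemma shift_single (i : ℤ) (h : P) :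
    shiftAut P (singleAt P i h) = singleAt P (i - 1) h := by
  apply Subtype.ext; funext j
  show (if j + 1 = i then h else 1) = (if j = i - 1 then h else 1)
  exact if_congr (by omega) rfl rfl

lemma shift_inv_single (i : ℤ) (h : P) :
    (shiftAut P)⁻¹ (singleAt P i h) = singleAt P (i + 1) h := by
  apply Subtype.ext; funext j
  show (if j - 1 = i then h else 1) = (if j = i + 1 then h else 1)
  exact if_congr (by omega) rfl rfl

lemma shift_zpow_single (n i : ℤ) (h : P) :
    (shiftAut P ^ n) (singleAt P i h) = singleAt P (i - n) h := by
  induction n using Int.induction_on generalizing i with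
  | zero => simp
  | succ k ih =>
      have e : (shiftAut P ^ ((k : ℤ) + 1)) (singleAt P i h) =
          (shiftAut P ^ (k : ℤ)) (shiftAut P (singleAt P i h)) := by
        rw [zpow_add_one]; rfl
      rw [e, shift_single, ih]
      congr 1; ring
  | pred k ih =>
      have e : (shiftAut P ^ (-(k : ℤ) - 1)) (singleAt P i h) =
          (shiftAut P ^ (-(k : ℤ))) ((shiftAut P)⁻¹ (singleAt P i h)) := by
        rw [zpow_sub_one]; rfl
      rw [e, shift_inv_single, ih]
      congr 1; ring

lemma conj_single (k : Hgrp P) (i : ℤ) (h : P) :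
    k * singleAt P i h * k⁻¹ = singleAt P i (k.1 i * h * (k.1 i)⁻¹) := by
  apply Subtype.ext; funext j
  show k.1 j * (if j = i then h else 1) * (k.1 j)⁻¹ =
    (if j = i then k.1 i * h * (k.1 i)⁻¹ else 1)
  split_ifs with hj
  · subst hj; rfl
  · simp

/-- Conjugation of an `inl` element. -/
lemma conj_inl (g : GZ P) (a : Hgrp P) :
    g * SemidirectProduct.inl a * g⁻¹ =
      SemidirectProduct.inl
        (g.left * (zpowersHom (MulAut (Hgrp P)) (shiftAut P)) g.right a * g.left⁻¹) := by
  set φ := zpowersHom (MulAut (Hgrp P)) (shiftAut P)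
  apply SemidirectProduct.ext
  · show g.left * φ g.right a * φ (g.right * 1) (φ g.right⁻¹ g.left⁻¹) = _
    rw [mul_one, ← MulAut.mul_apply, ← map_mul, mul_inv_cancel, map_one, MulAut.one_apply,
      left_inl]
  · show g.right * 1 * g.right⁻¹ = 1
    rw [mul_one, mul_inv_cancel]

/-- Conjugation of an `inr` element. -/
lemma conj_inr (g : GZ P) (n : Multiplicative ℤ) :
    g * SemidirectProduct.inr n * g⁻¹ =
      SemidirectProduct.inl
        (g.left * ((zpowersHom (MulAut (Hgrp P)) (shiftAut P)) n g.left)⁻¹) *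
      SemidirectProduct.inr n := by
  set φ := zpowersHom (MulAut (Hgrp P)) (shiftAut P)
  have hcomm : g.right * n * g.right⁻¹ = n := by
    rw [mul_comm g.right n, mul_assoc, mul_inv_cancel, mul_one]
  apply SemidirectProduct.ext
  · show g.left * φ g.right 1 * φ (g.right * n) (φ g.right⁻¹ g.left⁻¹) =
      (g.left * (φ n g.left)⁻¹) * φ 1 1
    rw [map_one, map_one, mul_one, mul_one, ← MulAut.mul_apply, ← map_mul, hcomm, map_inv]
  · show g.right * n * g.right⁻¹ = 1 * n
    rw [hcomm, one_mul]

end Aux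

/-- Fact A: for a finite group `P` satisfying (S1)–(S4), the conjugacy-invariant
closure of `S = H₀ ∪ {t, t⁻¹}` in `G_ℤ` is `(⋃ᵢ Hᵢ) ∪ T₊ ∪ T₋`. -/
theorem stmt_15 [Finite P]
    (hS1 : ∀ a₁ a₂ : P, ∃ x y : P, a₂ = x⁻¹ * a₁⁻¹ * y * x * y⁻¹)
    (hS2 : ∀ a₁ a₂ a₃ : P, ∃ u v : P,
      a₂ = a₃ * u * a₁⁻¹ * a₃⁻¹ * v * u⁻¹ * v⁻¹)
    (hS3 : ∀ u₁ u₂ u₃ u₄ : P, u₁ ≠ 1 → u₂ ≠ 1 → u₃ ≠ 1 → u₄ ≠ 1 →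
      ∃ x y z : P, u₄ = x⁻¹ * u₁ * x * (y⁻¹ * u₂ * y) * (z⁻¹ * u₃ * z))
    (hS4 : ∃ u₁ u₂ u₃ : P, u₁ ≠ 1 ∧ u₂ ≠ 1 ∧ u₃ ≠ 1 ∧
      ¬ ∃ x y : P, u₃ = x⁻¹ * u₂⁻¹ * x * (y⁻¹ * u₁⁻¹ * y))
    (S : Set (GZ P))
    (hS : S = {x : GZ P | ∃ h : P, x = SemidirectProduct.inl (singleAt P 0 h)} ∪
      {tElt P, (tElt P)⁻¹}) :
    {x : GZ P | ∃ s ∈ S, ∃ g : GZ P, g * s * g⁻¹ = x} =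
      {x : GZ P | ∃ (i : ℤ) (h : P), x = SemidirectProduct.inl (singleAt P i h)} ∪
      {x : GZ P | ∃ g : Hgrp P,
        x = SemidirectProduct.inl (g * shiftAut P g⁻¹) * tElt P} ∪
      {x : GZ P | ∃ g : Hgrp P,
        x = SemidirectProduct.inl (shiftAut P g * g⁻¹) * (tElt P)⁻¹} := by
  subst hS
  set φ := zpowersHom (MulAut (Hgrp P)) (shiftAut P) with hφ
  have hφapp : ∀ m : Multiplicative ℤ, φ m = shiftAut P ^ (Multiplicative.toAdd m) :=
    fun m => rfl
  have hφ1 : φ (Multiplicative.ofAdd 1) = shiftAut P := by rw [hφapp]; simp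
  have hφ1' : φ (Multiplicative.ofAdd 1)⁻¹ = (shiftAut P)⁻¹ := by rw [map_inv, hφ1]
  ext x
  simp only [Set.mem_union, Set.mem_setOf_eq, Set.mem_insert_iff, Set.mem_singleton_iff]
  constructor
  · rintro ⟨s, hs, g, rfl⟩
    rcases hs with (⟨h, rfl⟩ | rfl | rfl)
    · left; left
      rw [conj_inl]
      refine ⟨-(Multiplicative.toAdd g.right), g.left.1 (-(Multiplicative.toAdd g.right)) *
        h * (g.left.1 (-(Multiplicative.toAdd g.right)))⁻¹, ?_⟩
      rw [hφapp, shift_zpow_single, zero_sub, conj_single]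
    · left; right
      rw [show tElt P = SemidirectProduct.inr (Multiplicative.ofAdd 1) from rfl, conj_inr]
      refine ⟨g.left, ?_⟩
      rw [hφ1, ← map_inv]
    · right
      rw [show (tElt P)⁻¹ = SemidirectProduct.inr (Multiplicative.ofAdd 1)⁻¹ from
        (map_inv _ _).symm, conj_inr]
      refine ⟨(shiftAut P)⁻¹ g.left, ?_⟩
      rw [hφ1', MulAut.apply_inv_self _ (shiftAut P) g.left,
        show SemidirectProduct.inr (Multiplicative.ofAdd 1)⁻¹
        = (tElt P)⁻¹ from map_inv _ _]
  · rintro ((⟨i, h, rfl⟩ | ⟨a, rfl⟩) | ⟨a, rfl⟩)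
    · refine ⟨SemidirectProduct.inl (singleAt P 0 h), Or.inl ⟨h, rfl⟩,
        SemidirectProduct.inr (Multiplicative.ofAdd (-i)), ?_⟩
      rw [conj_inl]
      simp only [SemidirectProduct.left_inr, SemidirectProduct.right_inr, one_mul,
        inv_one, mul_one]
      rw [hφapp, shift_zpow_single]
      congr 2
      simp
    · refine ⟨tElt P, Or.inr (Or.inl rfl), SemidirectProduct.inl a, ?_⟩
      rw [show tElt P = SemidirectProduct.inr (Multiplicative.ofAdd 1) from rfl, conj_inr]
      simp only [SemidirectProduct.left_inl]
      rw [hφ1, ← map_inv]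
    · refine ⟨(tElt P)⁻¹, Or.inr (Or.inr rfl), SemidirectProduct.inl (shiftAut P a), ?_⟩
      rw [show (tElt P)⁻¹ = SemidirectProduct.inr (Multiplicative.ofAdd 1)⁻¹ from
        (map_inv _ _).symm, conj_inr]
      simp only [SemidirectProduct.left_inl]
      rw [show SemidirectProduct.inr (Multiplicative.ofAdd 1)⁻¹
        = (tElt P)⁻¹ from map_inv _ _, hφ1', MulAut.inv_apply_self _ (shiftAut P) a]
end

section
/- Let Λ ⊆ [0,∞) be closed convex with 0 ∈ Λ and suppose sup Λ ∈ Λ ∩ ℕ when it exists; set Λ₀ = Λ ∩ ℕ. Let ℓ₀ be an invariant pseudo-norm on a finite group G₀ with values in Λ. Define ℓ'(g) = ℓ₀(g) if ℓ₀(g) ∈ Λ₀, and ℓ'(g) = ⌊ℓ₀(g)⌋ + 1 otherwise. Then ℓ' is an invariant pseudo-norm on G₀ with values in Λ₀, and for every g and n ∈ ℕ: ℓ₀(g) ≤ n iff ℓ'(g) ≤ n. -/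
/-!
The rounding `ℓ'` is the natural-number ceiling `⌈ℓ₀⌉₊`, so symmetry, conjugation invariance and
`ℓ' 1 = 0` are inherited from `ℓ₀`, the triangle inequality follows from subadditivity of the
ceiling, and `⌈x⌉₊ ≤ n ↔ x ≤ n` is the comparison with natural numbers. That `⌈x⌉₊` stays in `Λ`
uses that `Λ` is an interval: either `Λ` is unbounded above, or its supremum is a natural number
in `Λ` lying above `x`, hence above `⌈x⌉₊`.
-/

lemma natCeil_eq_floor_add_one {x : ℝ} (hx : 0 ≤ x) (hnat : ¬∃ n : ℕ, x = n) :
    (⌈x⌉₊ : ℝ) = ⌊x⌋ + 1 := by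
  have hint : x ∉ Set.range ((↑) : ℤ → ℝ) := by
    rintro ⟨m, rfl⟩
    refine hnat ⟨m.toNat, ?_⟩
    rw [← Int.cast_natCast, Int.toNat_of_nonneg (by exact_mod_cast hx)]
  rw [natCast_ceil_eq_intCast_ceil hx, (Int.ceil_eq_floor_add_one_iff_notMem x).mpr hint]
  push_cast
  rfl

lemma Set.OrdConnected.natCeil_mem {s : Set ℝ} (hs : s.OrdConnected)
    (hsup : ∀ a, IsLUB s a → a ∈ s ∧ ∃ n : ℕ, a = n) {x : ℝ} (hx : x ∈ s) :
    (⌈x⌉₊ : ℝ) ∈ s := by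
  suffices ∃ y ∈ s, (⌈x⌉₊ : ℝ) ≤ y from
    let ⟨y, hy, hle⟩ := this
    hs.out hx hy ⟨Nat.le_ceil x, hle⟩
  by_cases hbdd : BddAbove s
  · obtain ⟨hmem, N, hN⟩ := hsup _ (isLUB_csSup ⟨x, hx⟩ hbdd)
    have hxN : x ≤ N := hN ▸ le_csSup hbdd hx
    exact ⟨sSup s, hmem, hN ▸ by exact_mod_cast Nat.ceil_le.mpr hxN⟩
  · obtain ⟨y, hy, hlt⟩ := not_bddAbove_iff.mp hbdd ⌈x⌉₊
    exact ⟨y, hy, hlt.le⟩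

theorem stmt_19_general {G₀ : Type*} [Group G₀] (Λ : Set ℝ)
    (hΛsub : Λ ⊆ Set.Ici (0 : ℝ))
    (hΛconv : Convex ℝ Λ)
    (hsup : ∀ x : ℝ, IsLUB Λ x → x ∈ Λ ∧ ∃ n : ℕ, x = n)
    (ℓ₀ : G₀ → ℝ) (hval : ∀ g, ℓ₀ g ∈ Λ)
    (h1 : ℓ₀ 1 = 0) (hsymm : ∀ g, ℓ₀ g⁻¹ = ℓ₀ g)
    (htri : ∀ g h, ℓ₀ (g * h) ≤ ℓ₀ g + ℓ₀ h)
    (hinv : ∀ g h, ℓ₀ (h⁻¹ * g * h) = ℓ₀ g)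
    (ℓ' : G₀ → ℝ)
    (hdef₁ : ∀ g, (∃ n : ℕ, ℓ₀ g = n) → ℓ' g = ℓ₀ g)
    (hdef₂ : ∀ g, ¬ (∃ n : ℕ, ℓ₀ g = n) → ℓ' g = ⌊ℓ₀ g⌋ + 1) :
    (∀ g, ℓ' g ∈ Λ ∧ ∃ n : ℕ, ℓ' g = n) ∧
      ℓ' 1 = 0 ∧ (∀ g, ℓ' g⁻¹ = ℓ' g) ∧
      (∀ g h, ℓ' (g * h) ≤ ℓ' g + ℓ' h) ∧
      (∀ g h, ℓ' (h⁻¹ * g * h) = ℓ' g) ∧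
      (∀ g (n : ℕ), ℓ₀ g ≤ n ↔ ℓ' g ≤ n) := by
  have hceil : ∀ g, ℓ' g = ⌈ℓ₀ g⌉₊ := fun g => by
    by_cases hnat : ∃ n : ℕ, ℓ₀ g = n
    · obtain ⟨n, hn⟩ := hnat
      rw [hdef₁ g ⟨n, hn⟩, hn, Nat.ceil_natCast]
    · rw [hdef₂ g hnat, natCeil_eq_floor_add_one (hΛsub (hval g)) hnat]
  simp only [hceil, h1, hsymm, hinv, Nat.ceil_zero, Nat.cast_zero, Nat.cast_le, Nat.ceil_le]
  refine ⟨fun g => ⟨hΛconv.ordConnected.natCeil_mem hsup (hval g), _, rfl⟩,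
    trivial, fun _ => trivial, fun g h => ?_, fun _ _ => trivial, fun _ _ => trivial⟩
  exact_mod_cast (Nat.ceil_mono (htri g h)).trans (Nat.ceil_add_le _ _)

/-- Rounding an invariant `Λ`-valued pseudo-norm on a finite group up to
`Λ₀ = Λ ∩ ℕ` yields an invariant `Λ₀`-valued pseudo-norm agreeing with the
original on comparisons with natural numbers. -/
theorem stmt_19 {G₀ : Type*} [Group G₀] [Finite G₀] (Λ : Set ℝ)
    (hΛ0 : (0 : ℝ) ∈ Λ) (hΛsub : Λ ⊆ Set.Ici (0 : ℝ))
    (hΛclosed : IsClosed Λ) (hΛconv : Convex ℝ Λ)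
    (hsup : ∀ x : ℝ, IsLUB Λ x → x ∈ Λ ∧ ∃ n : ℕ, x = n)
    (ℓ₀ : G₀ → ℝ) (hval : ∀ g, ℓ₀ g ∈ Λ)
    (h1 : ℓ₀ 1 = 0) (hsymm : ∀ g, ℓ₀ g⁻¹ = ℓ₀ g)
    (htri : ∀ g h, ℓ₀ (g * h) ≤ ℓ₀ g + ℓ₀ h)
    (hinv : ∀ g h, ℓ₀ (h⁻¹ * g * h) = ℓ₀ g)
    (ℓ' : G₀ → ℝ)
    (hdef₁ : ∀ g, (∃ n : ℕ, ℓ₀ g = n) → ℓ' g = ℓ₀ g)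
    (hdef₂ : ∀ g, ¬ (∃ n : ℕ, ℓ₀ g = n) → ℓ' g = ⌊ℓ₀ g⌋ + 1) :
    (∀ g, ℓ' g ∈ Λ ∧ ∃ n : ℕ, ℓ' g = n) ∧
      ℓ' 1 = 0 ∧ (∀ g, ℓ' g⁻¹ = ℓ' g) ∧
      (∀ g h, ℓ' (g * h) ≤ ℓ' g + ℓ' h) ∧
      (∀ g h, ℓ' (h⁻¹ * g * h) = ℓ' g) ∧
      (∀ g (n : ℕ), ℓ₀ g ≤ n ↔ ℓ' g ≤ n) :=
  stmt_19_general Λ hΛsub hΛconv hsup ℓ₀ hval h1 hsymm htri hinv ℓ' hdef₁ hdef₂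
end
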